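/- arXiv:0710.3466 — 3 statements merged into one kernel-verified Lean document; each statement's English description precedes it below -/
import Mathlib

section
/- Let V : ℝ² → ℝ be twice continuously differentiable with ∂V/∂x(0,y) = 0 for all y ∈ ℝ, let F : ℝ⁴ → ℝ be continuously differentiable and satisfy the libration-preserving condition, let E₀, ε₀ ∈ ℝ, and let w : U → ℝ be twice continuously differentiable on an open neighborhood U ⊆ ℝ⁴ of (0,0,ε₀,0) such that (1/2)p² + V(q, w(q,p,ε,δ)) + δ·F(q, w(q,p,ε,δ), p, 0) = ε + E₀ for all (q,p,ε,δ) ∈ U. Set y₀ := w(0,0,ε₀,0) and suppose ∂V/∂y(0,y₀) ≠ 0. Then ∂²w/∂q∂δ(0,0,ε₀,0) = 0 and ∂²w/∂p∂δ(0,0,ε₀,0) = 0. -/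
/-!
Differentiating the energy identity along a direction `d` gives a linear relation for `dw(d)`.
In the directions `q` and `p` at the libration point `(0, 0, ε₀, 0)` it reduces to
`V_y · w_q = V_y · w_p = 0`, because `V_x(0, y) = 0` and `p = δ = 0` there; hence `w_q = w_p = 0`.
In the direction `δ`, on the slice `δ = 0`, it reads `V_y(q, w) · w_δ + F(q, w, p, 0) = 0`.
Differentiating this relation once more along `q` or `p` at the libration point, the derivative of
`V_y(q, w)` vanishes since `w_q = w_p = 0` and `V_yx(0, y) = V_xy(0, y) = 0` by symmetry of the
Hessian, and the derivative of `F(q, w, p, 0)` vanishes by the libration-preserving condition.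
As `V_y ≠ 0`, what remains is `w_δq = w_δp = 0`.
-/

open Filter Topology

/-- The deformed Hamiltonian at the starting point `(q, w(u), p, 0)`, where `u = (q, p, ε, δ)`. -/
noncomputable def deformedEnergy (V : ℝ × ℝ → ℝ) (F : ℝ × ℝ × ℝ × ℝ → ℝ) (w : ℝ × ℝ × ℝ × ℝ → ℝ)
    (u : ℝ × ℝ × ℝ × ℝ) : ℝ :=
  (1 / 2) * u.2.1 ^ 2 + V (u.1, w u) + u.2.2.2 * F (u.1, w u, u.2.1, 0)

theorem fderiv_fderiv_apply_comm
    {E G : Type*} [NormedAddCommGroup E] [NormedSpace ℝ E]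
    [NormedAddCommGroup G] [NormedSpace ℝ G] {f : E → G} (hf : ContDiff ℝ 2 f) (x u v : E) :
    fderiv ℝ (fun z => fderiv ℝ f z v) x u = fderiv ℝ (fun z => fderiv ℝ f z u) x v := by
  have hf' : Differentiable ℝ (fderiv ℝ f) :=
    (hf.fderiv_right le_rfl).differentiable one_ne_zero
  rw [fderiv_clm_apply (hf' x) (differentiableAt_const _),
    fderiv_clm_apply (hf' x) (differentiableAt_const _)]
  simpa using (hf.contDiffAt.isSymmSndFDerivAt (by simp)).eq u v

theorem fderiv_fderiv_apply_eq_zero_of_line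
    {E G : Type*} [NormedAddCommGroup E] [NormedSpace ℝ E]
    [NormedAddCommGroup G] [NormedSpace ℝ G] {f : E → G} (hf : ContDiff ℝ 2 f) {x u v : E}
    (h : ∀ t : ℝ, fderiv ℝ f (x + t • u) v = 0) :
    fderiv ℝ (fun z => fderiv ℝ f z u) x v = 0 := by
  have hf' : Differentiable ℝ (fderiv ℝ f) :=
    (hf.fderiv_right le_rfl).differentiable one_ne_zero
  have hline : HasLineDerivAt ℝ (fun z => fderiv ℝ f z v)
      (fderiv ℝ (fun z => fderiv ℝ f z v) x u) x u :=
    ((hf' x).clm_apply (differentiableAt_const v)).hasFDerivAt.hasLineDerivAt u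
  rw [fderiv_fderiv_apply_comm hf]
  refine hline.unique ?_
  simp only [HasLineDerivAt, h]
  exact hasDerivAt_const _ _

theorem HasDerivAt.eq_zero_of_eventually_mul_add_eq_zero {a φ n : ℝ → ℝ} {φ' t : ℝ}
    (ha : HasDerivAt a 0 t) (hφ : HasDerivAt φ φ' t) (hn : HasDerivAt n 0 t) (hat : a t ≠ 0)
    (h : ∀ᶠ s in 𝓝 t, a s * φ s + n s = 0) : φ' = 0 := by
  have h' := ((ha.mul hφ).add hn).unique ((hasDerivAt_const t 0).congr_of_eventuallyEq h)
  simpa [hat] using h'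

theorem ContinuousLinearMap.apply_prod_eq (L : ℝ × ℝ →L[ℝ] ℝ) (a b : ℝ) :
    L (a, b) = a * L (1, 0) + b * L (0, 1) := by
  have : ((a, b) : ℝ × ℝ) = a • (1, 0) + b • (0, 1) := by simp
  rw [this, map_add, map_smul, map_smul, smul_eq_mul, smul_eq_mul]

section DeformedEnergy

variable {V : ℝ × ℝ → ℝ} {F : ℝ × ℝ × ℝ × ℝ → ℝ} {w : ℝ × ℝ × ℝ × ℝ → ℝ} {E₀ : ℝ}
  {u : ℝ × ℝ × ℝ × ℝ}

theorem fderiv_deformedEnergy_identity (hV : Differentiable ℝ V) (hF : Differentiable ℝ F)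
    (hw : DifferentiableAt ℝ w u)
    (himpl : ∀ᶠ u' in 𝓝 u, deformedEnergy V F w u' = u'.2.2.1 + E₀) (d : ℝ × ℝ × ℝ × ℝ) :
    u.2.1 * d.2.1 + fderiv ℝ V (u.1, w u) (d.1, fderiv ℝ w u d)
      + (d.2.2.2 * F (u.1, w u, u.2.1, 0)
        + u.2.2.2 * fderiv ℝ F (u.1, w u, u.2.1, 0) (d.1, fderiv ℝ w u d, d.2.1, 0))
      = d.2.2.1 := by
  have hq := hasFDerivAt_fst (𝕜 := ℝ) (p := u)
  have hp := (hasFDerivAt_snd (𝕜 := ℝ) (p := u)).fst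
  have hε := (hasFDerivAt_snd (𝕜 := ℝ) (p := u)).snd.fst
  have hδ := (hasFDerivAt_snd (𝕜 := ℝ) (p := u)).snd.snd
  have hV' := (hV (u.1, w u)).hasFDerivAt.comp u (hq.prodMk hw.hasFDerivAt)
  have hF' := (hF (u.1, w u, u.2.1, 0)).hasFDerivAt.comp u
    (hq.prodMk (hw.hasFDerivAt.prodMk (hp.prodMk (hasFDerivAt_const (0 : ℝ) u))))
  have hE : HasFDerivAt (deformedEnergy V F w) _ u :=
    (((hp.pow 2).const_mul (1 / 2)).add hV').add (hδ.mul hF')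
  have h := congr($(hE.unique ((hε.add_const E₀).congr_of_eventuallyEq himpl)) d)
  simp only [one_div, Nat.add_one_sub_one, pow_one, nsmul_eq_mul, Nat.cast_ofNat, add_apply,
    smul_apply, ContinuousLinearMap.comp_apply, ContinuousLinearMap.coe_snd',
    ContinuousLinearMap.coe_fst', smul_eq_mul, ContinuousLinearMap.prod_apply, zero_apply] at h
  linear_combination h

theorem fderiv_w_delta_identity (hV : Differentiable ℝ V) (hF : Differentiable ℝ F)
    (hw : DifferentiableAt ℝ w u)
    (himpl : ∀ᶠ u' in 𝓝 u, deformedEnergy V F w u' = u'.2.2.1 + E₀) (hu : u.2.2.2 = 0) :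
    fderiv ℝ V (u.1, w u) (0, 1) * fderiv ℝ w u (0, 0, 0, 1) + F (u.1, w u, u.2.1, 0) = 0 := by
  have h := fderiv_deformedEnergy_identity hV hF hw himpl (0, 0, 0, 1)
  rw [ContinuousLinearMap.apply_prod_eq] at h
  simpa [hu, mul_comm] using h

theorem fderiv_w_apply_eq_zero_of_libration {ε : ℝ} (hV : Differentiable ℝ V)
    (hF : Differentiable ℝ F) (hw : DifferentiableAt ℝ w (0, 0, ε, 0))
    (himpl : ∀ᶠ u in 𝓝 (0, 0, ε, 0), deformedEnergy V F w u = u.2.2.1 + E₀)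
    (hVx : fderiv ℝ V (0, w (0, 0, ε, 0)) (1, 0) = 0)
    (hVy : fderiv ℝ V (0, w (0, 0, ε, 0)) (0, 1) ≠ 0) (a b : ℝ) :
    fderiv ℝ w (0, 0, ε, 0) (a, b, 0, 0) = 0 := by
  have h := fderiv_deformedEnergy_identity hV hF hw himpl (a, b, 0, 0)
  rw [ContinuousLinearMap.apply_prod_eq, hVx] at h
  simpa [hVy] using h

theorem fderiv_fderiv_w_delta_eq_zero {x v : ℝ × ℝ × ℝ × ℝ}
    (hV : ContDiff ℝ 2 V) (hF : Differentiable ℝ F) (hw : ContDiffAt ℝ 2 w x)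
    (hx : x.2.2.2 = 0) (hv : v.2.2.2 = 0)
    (hslice : ∀ᶠ u in 𝓝 x, u.2.2.2 = 0 →
      fderiv ℝ V (u.1, w u) (0, 1) * fderiv ℝ w u (0, 0, 0, 1) + F (u.1, w u, u.2.1, 0) = 0)
    (hwv : fderiv ℝ w x v = 0)
    (hVxy : fderiv ℝ (fun z => fderiv ℝ V z (0, 1)) (x.1, w x) (1, 0) = 0)
    (hFv : fderiv ℝ F (x.1, w x, x.2.1, 0) (v.1, 0, v.2.1, 0) = 0)
    (hVy : fderiv ℝ V (x.1, w x) (0, 1) ≠ 0) :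
    fderiv ℝ (fun u => fderiv ℝ w u (0, 0, 0, 1)) x v = 0 := by
  set γ : ℝ → ℝ × ℝ × ℝ × ℝ := fun t => x + t • v
  have hγ : HasDerivAt γ v 0 := by
    simpa [γ] using ((hasDerivAt_id (0 : ℝ)).smul_const v).const_add x
  have hγ0 : x = γ 0 := by simp [γ]
  have hwx : HasFDerivAt w (fderiv ℝ w x) x :=
    (hw.differentiableAt two_ne_zero).hasFDerivAt
  have hq := hasFDerivAt_fst (𝕜 := ℝ) (p := x)
  have hp := (hasFDerivAt_snd (𝕜 := ℝ) (p := x)).fst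
  have hVy_diff : Differentiable ℝ (fun z => fderiv ℝ V z (0, 1)) :=
    ((hV.fderiv_right le_rfl).differentiable one_ne_zero).clm_apply (differentiable_const _)
  have ha : HasDerivAt (fun t => fderiv ℝ V ((γ t).1, w (γ t)) (0, 1)) 0 0 := by
    have hv1 : ((v.1, 0) : ℝ × ℝ) = v.1 • (1, 0) := by simp
    refine (((hVy_diff (x.1, w x)).hasFDerivAt.comp x (hq.prodMk hwx)).comp_hasDerivAt_of_eq 0 hγ
      hγ0).congr_deriv ?_
    simp only [ContinuousLinearMap.comp_apply, ContinuousLinearMap.prod_apply,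
      ContinuousLinearMap.coe_fst', hwv, hv1, map_smul, hVxy, smul_zero]
  have hφ : HasDerivAt (fun t => fderiv ℝ w (γ t) (0, 0, 0, 1))
      (fderiv ℝ (fun u => fderiv ℝ w u (0, 0, 0, 1)) x v) 0 :=
    (((hw.fderiv_right (m := 1) le_rfl).differentiableAt one_ne_zero).clm_apply
      (differentiableAt_const _)).hasFDerivAt.comp_hasDerivAt_of_eq 0 hγ hγ0
  have hn : HasDerivAt (fun t => F ((γ t).1, w (γ t), (γ t).2.1, 0)) 0 0 := by
    refine (((hF (x.1, w x, x.2.1, 0)).hasFDerivAt.comp x (hq.prodMk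
      (hwx.prodMk (hp.prodMk (hasFDerivAt_const (0 : ℝ) x))))).comp_hasDerivAt_of_eq 0 hγ
      hγ0).congr_deriv ?_
    simp only [ContinuousLinearMap.comp_apply, ContinuousLinearMap.prod_apply,
      ContinuousLinearMap.coe_fst', ContinuousLinearMap.coe_snd', zero_apply, hwv, hFv]
  refine ha.eq_zero_of_eventually_mul_add_eq_zero hφ hn (by simpa [γ] using hVy) ?_
  filter_upwards [(hγ0 ▸ hγ.continuousAt.tendsto).eventually hslice] with t ht
  exact ht (by simp [γ, hx, hv])

end DeformedEnergy

/-- The mixed second derivatives `∂²w/∂q∂δ` and `∂²w/∂p∂δ` of the deformed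
starting point function `w(q,p,ε,δ)`, defined implicitly by
`(1/2)p² + V(q,w) + δ·F(q,w,p,0) = ε + E₀`, vanish at `(0,0,ε₀,0)`. -/
theorem deformed_starting_point_mixed_derivatives_vanish
    (V : ℝ × ℝ → ℝ) (hV : ContDiff ℝ 2 V)
    (hlibV : ∀ y : ℝ, fderiv ℝ V (0, y) (1, 0) = 0)
    (F : ℝ × ℝ × ℝ × ℝ → ℝ) (hF : ContDiff ℝ 1 F)
    (hlibF : ∀ y py : ℝ,
      fderiv ℝ F (0, y, 0, py) (0, 0, 1, 0) = 0 ∧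
      fderiv ℝ F (0, y, 0, py) (1, 0, 0, 0) = 0)
    (E₀ ε₀ : ℝ)
    (U : Set (ℝ × ℝ × ℝ × ℝ)) (hU : IsOpen U)
    (hmem : ((0 : ℝ), (0 : ℝ), ε₀, (0 : ℝ)) ∈ U)
    (w : ℝ × ℝ × ℝ × ℝ → ℝ) (hw : ContDiffOn ℝ 2 w U)
    (himpl : ∀ u ∈ U,
      (1 / 2) * u.2.1 ^ 2 + V (u.1, w u) + u.2.2.2 * F (u.1, w u, u.2.1, 0)
        = u.2.2.1 + E₀)
    (hVy : fderiv ℝ V (0, w (0, 0, ε₀, 0)) (0, 1) ≠ 0) :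
    fderiv ℝ (fun u => fderiv ℝ w u (0, 0, 0, 1)) (0, 0, ε₀, 0) (1, 0, 0, 0) = 0 ∧
    fderiv ℝ (fun u => fderiv ℝ w u (0, 0, 0, 1)) (0, 0, ε₀, 0) (0, 1, 0, 0) = 0 := by
  have hV₁ : Differentiable ℝ V := hV.differentiable two_ne_zero
  have hF₁ : Differentiable ℝ F := hF.differentiable one_ne_zero
  have himpl_near : ∀ u ∈ U, ∀ᶠ u' in 𝓝 u, deformedEnergy V F w u' = u'.2.2.1 + E₀ :=
    fun u hu => eventually_of_mem (hU.mem_nhds hu) himpl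
  have hw₀ : ContDiffAt ℝ 2 w (0, 0, ε₀, 0) := hw.contDiffAt (hU.mem_nhds hmem)
  have hslice : ∀ᶠ u in 𝓝 (0, 0, ε₀, 0), u.2.2.2 = 0 →
      fderiv ℝ V (u.1, w u) (0, 1) * fderiv ℝ w u (0, 0, 0, 1) + F (u.1, w u, u.2.1, 0) = 0 := by
    filter_upwards [hU.mem_nhds hmem] with u hu
    exact fderiv_w_delta_identity hV₁ hF₁
      ((hw.contDiffAt (hU.mem_nhds hu)).differentiableAt two_ne_zero) (himpl_near u hu)
  have hVxy : fderiv ℝ (fun z => fderiv ℝ V z (0, 1)) (0, w (0, 0, ε₀, 0)) (1, 0) = 0 :=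
    fderiv_fderiv_apply_eq_zero_of_line hV fun t => by simpa using hlibV _
  have hw_qp := fderiv_w_apply_eq_zero_of_libration hV₁ hF₁ (hw₀.differentiableAt two_ne_zero)
    (himpl_near _ hmem) (hlibV _) hVy
  exact ⟨fderiv_fderiv_w_delta_eq_zero hV hF₁ hw₀ rfl rfl hslice (hw_qp 1 0) hVxy
      (hlibF _ 0).2 hVy,
    fderiv_fderiv_w_delta_eq_zero hV hF₁ hw₀ rfl rfl hslice (hw_qp 0 1) hVxy
      (hlibF _ 0).1 hVy⟩
end

section
/- Let n ∈ ℕ, let v : ℝⁿ → ℝⁿ be twice continuously differentiable, and let x : ℝ × ℝⁿ → ℝⁿ be three times continuously differentiable with ∂x/∂t(t,a) = v(x(t,a)) for all (t,a). Then for every a ∈ ℝⁿ and all direction vectors ω₁, ω₂ ∈ ℝⁿ, the function u(t) := D²_a x(t,a)(ω₁, ω₂) satisfies the second variational equation u'(t) = D²v(x(t,a))(D_a x(t,a)(ω₁), D_a x(t,a)(ω₂)) + Dv(x(t,a))(u(t)) for all t. -/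
open ContinuousLinearMap

section helpers
variable {G H F : Type*} [NormedAddCommGroup G] [NormedSpace ℝ G]
  [NormedAddCommGroup H] [NormedSpace ℝ H] [NormedAddCommGroup F] [NormedSpace ℝ F]

/-- derivative of evaluation at a fixed vector -/
private lemma fderiv_eval_const (g : G → (H →L[ℝ] F)) {p : G} (hg : DifferentiableAt ℝ g p)
    (c : H) (b : G) :
    fderiv ℝ (fun q => g q c) p b = fderiv ℝ g p b c := by
  have h := ((ContinuousLinearMap.apply ℝ F c).hasFDerivAt.comp p hg.hasFDerivAt).fderiv
  simp only [Function.comp_def] at h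
  rw [show (fun q => g q c) = fun q => (ContinuousLinearMap.apply ℝ F c) (g q) from rfl, h]
  rfl

variable {m : ℕ}

/-- partial fderiv in the second variable -/
private lemma pd2 (g : ℝ × (Fin m → ℝ) → F) (hg : Differentiable ℝ g)
    (s : ℝ) (b ω : Fin m → ℝ) :
    fderiv ℝ (fun c => g (s, c)) b ω = fderiv ℝ g (s, b) (0, ω) := by
  have h := ((hg (s, b)).hasFDerivAt.comp b (hasFDerivAt_prodMk_right s b)).fderiv
  simp only [Function.comp_def] at h
  rw [h]; rfl

/-- partial derivative in the first (time) variable -/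
private lemma pd1 (g : ℝ × (Fin m → ℝ) → F) (hg : Differentiable ℝ g)
    (s : ℝ) (b : Fin m → ℝ) :
    deriv (fun r => g (r, b)) s = fderiv ℝ g (s, b) (1, 0) := by
  have h := ((hg (s, b)).hasFDerivAt.comp s (hasFDerivAt_prodMk_left s b)).hasDerivAt.deriv
  simp only [Function.comp_def] at h
  rw [h]; rfl

end helpers

/-- Second variational equation. If `x(t,a)` is a flow-type family of
solutions of `x' = v(x)`, then `u(t) := D²ₐx(t,a)(ω₁,ω₂)` satisfies
`u'(t) = D²v(x(t,a))(Dₐx(t,a)(ω₁), Dₐx(t,a)(ω₂)) + Dv(x(t,a))(u(t))`. -/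
theorem second_variational_equation
    (n : ℕ) (v : (Fin n → ℝ) → (Fin n → ℝ)) (hv : ContDiff ℝ 2 v)
    (x : ℝ × (Fin n → ℝ) → (Fin n → ℝ)) (hx : ContDiff ℝ 3 x)
    (hflow : ∀ (t : ℝ) (a : Fin n → ℝ), deriv (fun s => x (s, a)) t = v (x (t, a))) :
    ∀ (a ω₁ ω₂ : Fin n → ℝ) (t : ℝ),
      deriv (fun s : ℝ =>
          fderiv ℝ (fun b => fderiv ℝ (fun c => x (s, c)) b ω₂) a ω₁) t
        = fderiv ℝ (fun z => fderiv ℝ v z (fderiv ℝ (fun b => x (t, b)) a ω₂))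
            (x (t, a)) (fderiv ℝ (fun b => x (t, b)) a ω₁)
          + fderiv ℝ v (x (t, a))
              (fderiv ℝ (fun b => fderiv ℝ (fun c => x (t, c)) b ω₂) a ω₁) := by
  intro a ω₁ ω₂ t
  have hxd : Differentiable ℝ x := hx.differentiable (by norm_num)
  have hf' : ContDiff ℝ 2 (fderiv ℝ x) := hx.fderiv_right (by norm_num)
  have hf'd : Differentiable ℝ (fderiv ℝ x) := hf'.differentiable (by norm_num)
  have hf'' : ContDiff ℝ 1 (fderiv ℝ (fderiv ℝ x)) := hf'.fderiv_right (by norm_num)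
  have hf''d : Differentiable ℝ (fderiv ℝ (fderiv ℝ x)) := hf''.differentiable (by norm_num)
  have hvd : Differentiable ℝ v := hv.differentiable (by norm_num)
  have hv' : ContDiff ℝ 1 (fderiv ℝ v) := hv.fderiv_right (by norm_num)
  have hv'd : Differentiable ℝ (fderiv ℝ v) := hv'.differentiable (by norm_num)
  -- Step A : the second a-derivative as a full second derivative
  have keyA : ∀ s : ℝ, (fun b => fderiv ℝ (fun c => x (s, c)) b ω₂)
      = fun b => fderiv ℝ x (s, b) (0, ω₂) :=
    fun s => funext fun b => pd2 x hxd s b ω₂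
  have hX₂d : Differentiable ℝ (fun q : ℝ × (Fin n → ℝ) => fderiv ℝ x q (0, ω₂)) :=
    fun q => (hf'd q).clm_apply (differentiableAt_const _)
  have keyU : ∀ s : ℝ,
      fderiv ℝ (fun b => fderiv ℝ (fun c => x (s, c)) b ω₂) a ω₁
        = fderiv ℝ (fderiv ℝ x) (s, a) (0, ω₁) (0, ω₂) := by
    intro s
    rw [keyA s]
    calc fderiv ℝ (fun b => fderiv ℝ x (s, b) (0, ω₂)) a ω₁
        = fderiv ℝ (fun q => fderiv ℝ x q (0, ω₂)) (s, a) (0, ω₁) :=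
          pd2 (fun q => fderiv ℝ x q (0, ω₂)) hX₂d s a ω₁
      _ = fderiv ℝ (fderiv ℝ x) (s, a) (0, ω₁) (0, ω₂) :=
          fderiv_eval_const (fderiv ℝ x) (hf'd (s, a)) (0, ω₂) (0, ω₁)
  -- evaluation of the third derivative
  have evals : ∀ (b c d : ℝ × (Fin n → ℝ)),
      fderiv ℝ (fun p => fderiv ℝ (fderiv ℝ x) p c d) (t, a) b
        = fderiv ℝ (fderiv ℝ (fderiv ℝ x)) (t, a) b c d := by
    intro b c d
    have hg : Differentiable ℝ (fun p : ℝ × (Fin n → ℝ) => fderiv ℝ (fderiv ℝ x) p c) :=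
      fun p => (hf''d p).clm_apply (differentiableAt_const _)
    rw [fderiv_eval_const (fun p => fderiv ℝ (fderiv ℝ x) p c) (hg (t, a)) d b,
        fderiv_eval_const (fderiv ℝ (fderiv ℝ x)) (hf''d (t, a)) c b]
  -- Step B : the time derivative of u as a third derivative
  have hG3 : Differentiable ℝ
      (fun p : ℝ × (Fin n → ℝ) => fderiv ℝ (fderiv ℝ x) p (0, ω₁) (0, ω₂)) :=
    fun p => (((hf''d p).clm_apply (differentiableAt_const _)).clm_apply
      (differentiableAt_const _))
  have hL : deriv (fun s : ℝ =>
        fderiv ℝ (fun b => fderiv ℝ (fun c => x (s, c)) b ω₂) a ω₁) t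
      = fderiv ℝ (fderiv ℝ (fderiv ℝ x)) (t, a) (1, 0) (0, ω₁) (0, ω₂) := by
    have e : (fun s : ℝ =>
          fderiv ℝ (fun b => fderiv ℝ (fun c => x (s, c)) b ω₂) a ω₁)
        = fun s => fderiv ℝ (fderiv ℝ x) (s, a) (0, ω₁) (0, ω₂) := funext keyU
    rw [e, pd1 (fun p => fderiv ℝ (fderiv ℝ x) p (0, ω₁) (0, ω₂)) hG3 t a]
    exact evals (1, 0) (0, ω₁) (0, ω₂)
  -- Step C : symmetry of the second and third derivatives
  have sym2 : ∀ (p b c : ℝ × (Fin n → ℝ)),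
      fderiv ℝ (fderiv ℝ x) p b c = fderiv ℝ (fderiv ℝ x) p c b :=
    fun p => second_derivative_symmetric (fun y => (hxd y).hasFDerivAt)
      ((hf'd p).hasFDerivAt)
  have sym3 : ∀ (b c : ℝ × (Fin n → ℝ)),
      fderiv ℝ (fderiv ℝ (fderiv ℝ x)) (t, a) b c
        = fderiv ℝ (fderiv ℝ (fderiv ℝ x)) (t, a) c b :=
    second_derivative_symmetric (fun y => (hf'd y).hasFDerivAt)
      ((hf''d (t, a)).hasFDerivAt)
  have swap23 : fderiv ℝ (fderiv ℝ (fderiv ℝ x)) (t, a) (0, ω₁) (1, 0) (0, ω₂)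
      = fderiv ℝ (fderiv ℝ (fderiv ℝ x)) (t, a) (0, ω₁) (0, ω₂) (1, 0) := by
    rw [← evals (0, ω₁) (1, 0) (0, ω₂), ← evals (0, ω₁) (0, ω₂) (1, 0)]
    have e : (fun p => fderiv ℝ (fderiv ℝ x) p (1, 0) (0, ω₂))
        = fun p => fderiv ℝ (fderiv ℝ x) p (0, ω₂) (1, 0) := funext fun p => sym2 p _ _
    rw [e]
  -- Step D : the flow equation and its consequences
  have hflow' : ∀ q : ℝ × (Fin n → ℝ), fderiv ℝ x q (1, 0) = v (x q) := by
    rintro ⟨s, b⟩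
    rw [← pd1 x hxd s b]
    exact hflow s b
  have keyD : (fun p => fderiv ℝ (fderiv ℝ x) p (0, ω₂) (1, 0))
      = fun p => fderiv ℝ v (x p) (fderiv ℝ x p (0, ω₂)) := by
    funext p
    have h1 : fderiv ℝ (fun q => fderiv ℝ x q (1, 0)) p (0, ω₂)
        = fderiv ℝ (fderiv ℝ x) p (0, ω₂) (1, 0) :=
      fderiv_eval_const (fderiv ℝ x) (hf'd p) (1, 0) (0, ω₂)
    rw [← h1]
    have e : (fun q => fderiv ℝ x q (1, 0)) = fun q => v (x q) := funext hflow'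
    rw [e]
    have hcomp := fderiv_comp (𝕜 := ℝ) p (hvd (x p)) (hxd p)
    simp only [Function.comp_def] at hcomp
    rw [hcomp]
    rfl
  -- chain rule pieces
  have hc1 : DifferentiableAt ℝ (fun p : ℝ × (Fin n → ℝ) => fderiv ℝ v (x p)) (t, a) :=
    (hv'd (x (t, a))).comp (t, a) (hxd (t, a))
  have hu1 : DifferentiableAt ℝ (fun p : ℝ × (Fin n → ℝ) => fderiv ℝ x p (0, ω₂)) (t, a) :=
    (hf'd (t, a)).clm_apply (differentiableAt_const _)
  have hmain := fderiv_clm_apply hc1 hu1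
  have hcomp2 : fderiv ℝ (fun p : ℝ × (Fin n → ℝ) => fderiv ℝ v (x p)) (t, a)
      = (fderiv ℝ (fderiv ℝ v) (x (t, a))).comp (fderiv ℝ x (t, a)) := by
    have h := fderiv_comp (𝕜 := ℝ) (t, a) (hv'd (x (t, a))) (hxd (t, a))
    simp only [Function.comp_def] at h
    exact h
  -- rewrite the RHS of the goal
  have hDω : ∀ ω, fderiv ℝ (fun b => x (t, b)) a ω = fderiv ℝ x (t, a) (0, ω) :=
    fun ω => pd2 x hxd t a ω
  rw [hDω ω₁, hDω ω₂, keyU t,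
    fderiv_eval_const (fderiv ℝ v) (hv'd (x (t, a))) (fderiv ℝ x (t, a) (0, ω₂))
      (fderiv ℝ x (t, a) (0, ω₁))]
  -- final computation
  calc deriv (fun s : ℝ =>
        fderiv ℝ (fun b => fderiv ℝ (fun c => x (s, c)) b ω₂) a ω₁) t
      = fderiv ℝ (fderiv ℝ (fderiv ℝ x)) (t, a) (1, 0) (0, ω₁) (0, ω₂) := hL
    _ = fderiv ℝ (fderiv ℝ (fderiv ℝ x)) (t, a) (0, ω₁) (1, 0) (0, ω₂) := by
        rw [sym3 (1, 0) (0, ω₁)]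
    _ = fderiv ℝ (fderiv ℝ (fderiv ℝ x)) (t, a) (0, ω₁) (0, ω₂) (1, 0) := swap23
    _ = fderiv ℝ (fun p => fderiv ℝ v (x p) (fderiv ℝ x p (0, ω₂))) (t, a) (0, ω₁) := by
        rw [← evals (0, ω₁) (0, ω₂) (1, 0), keyD]
    _ = fderiv ℝ (fderiv ℝ v) (x (t, a)) (fderiv ℝ x (t, a) (0, ω₁))
          (fderiv ℝ x (t, a) (0, ω₂))
        + fderiv ℝ v (x (t, a)) (fderiv ℝ (fderiv ℝ x) (t, a) (0, ω₁) (0, ω₂)) := by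
        have happ := congrArg
          (fun (L : (ℝ × (Fin n → ℝ)) →L[ℝ] (Fin n → ℝ)) => L (0, ω₁)) hmain
        simp only [ContinuousLinearMap.add_apply, ContinuousLinearMap.flip_apply,
          ContinuousLinearMap.coe_comp', Function.comp_apply] at happ
        rw [happ, hcomp2,
          fderiv_eval_const (fderiv ℝ x) (hf'd (t, a)) (0, ω₂) (0, ω₁)]
        exact add_comm _ _
end

section
/- Let V : ℝ² → ℝ be twice continuously differentiable with ∂V/∂x(0,y) = 0 for all y ∈ ℝ, let F : ℝ⁴ → ℝ be twice continuously differentiable and satisfy the libration-preserving condition, and let δ ∈ ℝ. If c = (c₁,c₂,c₃,c₄) : ℝ → ℝ⁴ is differentiable and satisfies the deformed Hamilton's equations c₁' = c₃ + δ·∂F/∂p_x(c), c₂' = c₄ + δ·∂F/∂p_y(c), c₃' = −∂V/∂x(c₁,c₂) − δ·∂F/∂x(c), c₄' = −∂V/∂y(c₁,c₂) − δ·∂F/∂y(c) on all of ℝ, and c₁(0) = c₃(0) = 0, then c₁(t) = 0 and c₃(t) = 0 for all t ∈ ℝ. -/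
/-!
In the coordinates `(x, pₓ)` the deformed equations read `(x, pₓ)' = G((x, pₓ), (y, p_y))` with
`G` of class `C¹`, and the libration conditions say exactly that `G(0, ·) = 0`. Treating
`(y(t), p_y(t))` as a given continuous parameter, both `(c₁, c₃)` and the zero curve solve the same
ODE, whose right-hand side is locally Lipschitz in the state; local uniqueness makes the set where
they agree open, so by connectedness of `ℝ` they agree everywhere.
-/

open Filter Topology

section LocallyLipschitzODE

variable {E P : Type*} [NormedAddCommGroup E] [NormedSpace ℝ E] [PseudoMetricSpace P]
  {G : E × P → E} {z : ℝ → P} {f g : ℝ → E}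

/-- Freezing the parameter `p = z t` turns a locally Lipschitz `G` into a time-dependent vector
field that is Lipschitz in the state near `(f t₀, z t₀)`, uniformly for `t` near `t₀`. -/
theorem ODE_solution_eventuallyEq_of_locallyLipschitz (hG : LocallyLipschitz G) {t₀ : ℝ}
    (hz : ContinuousAt z t₀)
    (hf : ∀ᶠ t in 𝓝 t₀, HasDerivAt f (G (f t, z t)) t)
    (hg : ∀ᶠ t in 𝓝 t₀, HasDerivAt g (G (g t, z t)) t)
    (heq : f t₀ = g t₀) : f =ᶠ[𝓝 t₀] g := by
  obtain ⟨K, U, hU, hlip⟩ := hG (f t₀, z t₀)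
  have hv : ∀ t, LipschitzOnWith K (fun u ↦ G (u, z t)) {u | (u, z t) ∈ U} := fun t ↦ by
    have := hlip.comp (LipschitzWith.prodMk_right (z t)).lipschitzOnWith fun _ hu ↦ hu
    rwa [mul_one] at this
  have hmem : ∀ {h : ℝ → E}, h t₀ = f t₀ → ContinuousAt h t₀ →
      ∀ᶠ t in 𝓝 t₀, (h t, z t) ∈ U :=
    fun h₀ hh ↦ (hh.prodMk hz).preimage_mem_nhds (h₀ ▸ hU)
  refine ODE_solution_unique_of_eventually (.of_forall hv) ?_ ?_ heq
  · exact hf.and (hmem rfl hf.self_of_nhds.continuousAt)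
  · exact hg.and (hmem heq.symm hg.self_of_nhds.continuousAt)

theorem ODE_solution_eq_of_locallyLipschitz (hG : LocallyLipschitz G) (hz : Continuous z)
    (hf : ∀ t, HasDerivAt f (G (f t, z t)) t) (hg : ∀ t, HasDerivAt g (G (g t, z t)) t)
    {t₀ : ℝ} (heq : f t₀ = g t₀) : f = g := by
  have hopen : IsOpen {t | f t = g t} := isOpen_iff_mem_nhds.2 fun _ ht ↦
    ODE_solution_eventuallyEq_of_locallyLipschitz hG hz.continuousAt (.of_forall hf)
      (.of_forall hg) ht
  have hclosed : IsClosed {t | f t = g t} :=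
    isClosed_eq (continuous_iff_continuousAt.2 fun t ↦ (hf t).continuousAt)
      (continuous_iff_continuousAt.2 fun t ↦ (hg t).continuousAt)
  exact funext (Set.eq_univ_iff_forall.1 (IsClopen.eq_univ ⟨hclosed, hopen⟩ ⟨t₀, heq⟩))

end LocallyLipschitzODE

/-- The `(x', pₓ')` components of the deformed Hamiltonian vector field, as a function of
`((x, pₓ), (y, p_y))`. -/
noncomputable def transverseField (V : ℝ × ℝ → ℝ) (F : ℝ × ℝ × ℝ × ℝ → ℝ) (δ : ℝ)
    (q : (ℝ × ℝ) × (ℝ × ℝ)) : ℝ × ℝ :=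
  (q.1.2 + δ * fderiv ℝ F (q.1.1, q.2.1, q.1.2, q.2.2) (0, 0, 1, 0),
    -fderiv ℝ V (q.1.1, q.2.1) (1, 0) - δ * fderiv ℝ F (q.1.1, q.2.1, q.1.2, q.2.2) (1, 0, 0, 0))

theorem contDiff_transverseField {V : ℝ × ℝ → ℝ} {F : ℝ × ℝ × ℝ × ℝ → ℝ}
    (hV : ContDiff ℝ 2 V) (hF : ContDiff ℝ 2 F) (δ : ℝ) :
    ContDiff ℝ 1 (transverseField V F δ) := by
  have hdV : ContDiff ℝ 1 (fderiv ℝ V) := hV.fderiv_right (by norm_num)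
  have hdF : ContDiff ℝ 1 (fderiv ℝ F) := hF.fderiv_right (by norm_num)
  unfold transverseField
  fun_prop

theorem transverseField_zero_left {V : ℝ × ℝ → ℝ} {F : ℝ × ℝ × ℝ × ℝ → ℝ}
    (hlibV : ∀ y : ℝ, fderiv ℝ V (0, y) (1, 0) = 0)
    (hlibF : ∀ y py : ℝ,
      fderiv ℝ F (0, y, 0, py) (0, 0, 1, 0) = 0 ∧ fderiv ℝ F (0, y, 0, py) (1, 0, 0, 0) = 0)
    (δ : ℝ) (p : ℝ × ℝ) : transverseField V F δ (0, p) = 0 := by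
  simp [transverseField, hlibV, hlibF]

theorem invariant_plane_deformed_flow_general
    (V : ℝ × ℝ → ℝ) (hV : ContDiff ℝ 2 V)
    (hlibV : ∀ y : ℝ, fderiv ℝ V (0, y) (1, 0) = 0)
    (F : ℝ × ℝ × ℝ × ℝ → ℝ) (hF : ContDiff ℝ 2 F)
    (hlibF : ∀ y py : ℝ,
      fderiv ℝ F (0, y, 0, py) (0, 0, 1, 0) = 0 ∧
      fderiv ℝ F (0, y, 0, py) (1, 0, 0, 0) = 0)
    (δ : ℝ)
    (c₁ c₂ c₃ c₄ : ℝ → ℝ)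
    (hd₁ : Differentiable ℝ c₁) (hd₂ : Differentiable ℝ c₂)
    (hd₃ : Differentiable ℝ c₃) (hd₄ : Differentiable ℝ c₄)
    (e₁ : ∀ t : ℝ, deriv c₁ t
        = c₃ t + δ * fderiv ℝ F (c₁ t, c₂ t, c₃ t, c₄ t) (0, 0, 1, 0))
    (e₃ : ∀ t : ℝ, deriv c₃ t
        = - fderiv ℝ V (c₁ t, c₂ t) (1, 0)
          - δ * fderiv ℝ F (c₁ t, c₂ t, c₃ t, c₄ t) (1, 0, 0, 0))
    (h₁0 : c₁ 0 = 0) (h₃0 : c₃ 0 = 0) :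
    ∀ t : ℝ, c₁ t = 0 ∧ c₃ t = 0 := by
  have hsol : ∀ t, HasDerivAt (fun t ↦ (c₁ t, c₃ t))
      (transverseField V F δ ((c₁ t, c₃ t), (c₂ t, c₄ t))) t := fun t ↦ by
    simpa [transverseField, e₁ t, e₃ t] using (hd₁ t).hasDerivAt.prodMk (hd₃ t).hasDerivAt
  have hrest : ∀ t, HasDerivAt (fun _ ↦ (0 : ℝ × ℝ))
      (transverseField V F δ (0, (c₂ t, c₄ t))) t := fun t ↦ by
    simpa [transverseField_zero_left hlibV hlibF] using hasDerivAt_const t (0 : ℝ × ℝ)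
  have hplane := ODE_solution_eq_of_locallyLipschitz
    (contDiff_transverseField hV hF δ).locallyLipschitz (hd₂.continuous.prodMk hd₄.continuous)
    hsol hrest (t₀ := 0) (by simp [h₁0, h₃0])
  exact fun t ↦ by simpa using congrFun hplane t

/-- The plane `x = pₓ = 0` is invariant under the deformed Hamiltonian
flow: any solution of the deformed Hamilton's equations starting with
`x(0) = pₓ(0) = 0` satisfies `x(t) = pₓ(t) = 0` for all `t`. -/
theorem invariant_plane_deformed_flow
    (V : ℝ × ℝ → ℝ) (hV : ContDiff ℝ 2 V)
    (hlibV : ∀ y : ℝ, fderiv ℝ V (0, y) (1, 0) = 0)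
    (F : ℝ × ℝ × ℝ × ℝ → ℝ) (hF : ContDiff ℝ 2 F)
    (hlibF : ∀ y py : ℝ,
      fderiv ℝ F (0, y, 0, py) (0, 0, 1, 0) = 0 ∧
      fderiv ℝ F (0, y, 0, py) (1, 0, 0, 0) = 0)
    (δ : ℝ)
    (c₁ c₂ c₃ c₄ : ℝ → ℝ)
    (hd₁ : Differentiable ℝ c₁) (hd₂ : Differentiable ℝ c₂)
    (hd₃ : Differentiable ℝ c₃) (hd₄ : Differentiable ℝ c₄)
    (e₁ : ∀ t : ℝ, deriv c₁ t
        = c₃ t + δ * fderiv ℝ F (c₁ t, c₂ t, c₃ t, c₄ t) (0, 0, 1, 0))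
    (e₂ : ∀ t : ℝ, deriv c₂ t
        = c₄ t + δ * fderiv ℝ F (c₁ t, c₂ t, c₃ t, c₄ t) (0, 0, 0, 1))
    (e₃ : ∀ t : ℝ, deriv c₃ t
        = - fderiv ℝ V (c₁ t, c₂ t) (1, 0)
          - δ * fderiv ℝ F (c₁ t, c₂ t, c₃ t, c₄ t) (1, 0, 0, 0))
    (e₄ : ∀ t : ℝ, deriv c₄ t
        = - fderiv ℝ V (c₁ t, c₂ t) (0, 1)
          - δ * fderiv ℝ F (c₁ t, c₂ t, c₃ t, c₄ t) (0, 1, 0, 0))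
    (h₁0 : c₁ 0 = 0) (h₃0 : c₃ 0 = 0) :
    ∀ t : ℝ, c₁ t = 0 ∧ c₃ t = 0 :=
  invariant_plane_deformed_flow_general V hV hlibV F hF hlibF δ c₁ c₂ c₃ c₄ hd₁ hd₂ hd₃ hd₄ e₁ e₃
    h₁0 h₃0
end
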